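/- Let 0 < q < 1 and ν ∈ ℝ. Define ψ_L(z̄, z) = ∑_{m=0}^∞ (−1)^m q^{2m} (q^{−2iν+2};q²)_m / (q²;q²)_m · (z̄ z)^m, which converges absolutely for |z̄ z| < q^{−2}. Then: (i) ψ_L is the U_q(SU(2))-invariant vector of the class-one principal series representation, i.e. for all z, z̄ ∈ ℂ∖{0} with all arguments in the domain of convergence, (z̄/(1−q²)) (−q^{(iν+2)/2} ψ_L(q^{−1}z̄, z) + q^{−3iν/2+3} ψ_L(q z̄, z)) = q^{iν/2} (ψ_L(z̄, q^{−1}z) − ψ_L(z̄, q z)) / ((1−q²) z) (the condition π(C*).ψ_L = ψ_L.π(B)), and ψ_L(q^{−1}z̄, q z) = ψ_L(z̄, z) (the condition π(A*).ψ_L.π(A^{−1}) = ψ_L); (ii) ψ_L has the closed form ψ_L(z̄, z) = (−q^{−2iν+4} z̄z ; q²)_∞ / (−q² z̄z ; q²)_∞ for |z̄z| < q^{−2}. -/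

import Mathlib

/-- The finite q-Pochhammer symbol `(a;Q)_n = ∏_{j<n} (1 − a Q^j)`. -/
noncomputable def qPoch (Q a : ℂ) (n : ℕ) : ℂ :=
  ∏ j ∈ Finset.range n, (1 - a * Q ^ j)

/-- The infinite q-Pochhammer symbol `(a;Q)_∞ = ∏_{j≥0} (1 − a Q^j)`. -/
noncomputable def qPochInf (Q a : ℂ) : ℂ :=
  ∏' j : ℕ, (1 - a * Q ^ j)

/-- `q^w = exp(w ln q)` for real `q > 0` and complex `w`. -/
noncomputable def qpow (q : ℝ) (w : ℂ) : ℂ := Complex.exp (w * (Real.log q : ℂ))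

/-- The `U_q(SU(2))`-invariant vector
`ψ_L(z̄,z) = ∑_m (−1)^m q^{2m} (q^{−2iν+2};q²)_m/(q²;q²)_m (z̄z)^m`. -/
noncomputable def psiL (q ν : ℝ) (zb z : ℂ) : ℂ :=
  ∑' m : ℕ, (-1) ^ m * (q : ℂ) ^ (2 * m)
    * qPoch ((q : ℂ) ^ 2) (qpow q (-(2 * Complex.I * ν) + 2)) m
    / qPoch ((q : ℂ) ^ 2) ((q : ℂ) ^ 2) m * (zb * z) ^ m

/-! With `a = q^{-2iν+2}` and `Q = q²`, `ψ_L(z̄,z)` is the basic hypergeometric series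
`φ(x) = ₁φ₀(a;–;Q;x) = ∑ (a;Q)_m/(Q;Q)_m x^m` at `x = −q² z̄z`; it depends only on `z̄z`, which
gives the `A`-relation. The coefficient recurrence `c_{m+1}(1 − Q^{m+1}) = c_m(1 − aQ^m)` shows
that the series converges on the unit disc and satisfies `(1 − x)φ(x) = (1 − ax)φ(Qx)`; at
`x = −q z̄z` this is exactly `π(C*).ψ_L = ψ_L.π(B)`. Iterating it gives
`φ(x)(x;Q)_n = (ax;Q)_n φ(Qⁿx)`, and since `φ` is continuous at `0` with `φ(0) = 1`, letting
`n → ∞` yields the `q`-binomial theorem `φ(x) = (ax;Q)_∞/(x;Q)_∞`, i.e. the closed form. -/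

open Filter Topology

section QBinomial

variable {Q : ℂ}

lemma qPoch_zero (Q a : ℂ) : qPoch Q a 0 = 1 := Finset.prod_range_zero _

lemma qPoch_succ (Q a : ℂ) (n : ℕ) : qPoch Q a (n + 1) = qPoch Q a n * (1 - a * Q ^ n) :=
  Finset.prod_range_succ _ _

lemma one_sub_ne_zero_of_norm_lt_one {R : Type*} [SeminormedRing R] [NormOneClass R] {y : R}
    (hy : ‖y‖ < 1) : 1 - y ≠ 0 := by
  rw [sub_ne_zero]
  rintro rfl
  simp at hy

lemma norm_one_sub_pow_succ_pos (hQ : ‖Q‖ < 1) (n : ℕ) : 0 < ‖1 - Q ^ (n + 1)‖ :=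
  norm_pos_iff.2 <| one_sub_ne_zero_of_norm_lt_one <| by
    rw [norm_pow]; exact pow_lt_one₀ (norm_nonneg Q) hQ n.succ_ne_zero

lemma qPoch_self_ne_zero (hQ : ‖Q‖ < 1) (n : ℕ) : qPoch Q Q n ≠ 0 :=
  Finset.prod_ne_zero_iff.2 fun j _ => by
    rw [← pow_succ']; exact norm_pos_iff.1 (norm_one_sub_pow_succ_pos hQ j)

noncomputable def qBinomialCoeff (Q a : ℂ) (m : ℕ) : ℂ := qPoch Q a m / qPoch Q Q m

noncomputable def qBinomialSeries (Q a x : ℂ) : ℂ := ∑' m : ℕ, qBinomialCoeff Q a m * x ^ m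

lemma qBinomialCoeff_zero (Q a : ℂ) : qBinomialCoeff Q a 0 = 1 := by
  simp [qBinomialCoeff, qPoch_zero]

lemma qBinomialCoeff_succ_mul (hQ : ‖Q‖ < 1) (a : ℂ) (m : ℕ) :
    qBinomialCoeff Q a (m + 1) * (1 - Q ^ (m + 1)) = qBinomialCoeff Q a m * (1 - a * Q ^ m) := by
  have hm := qPoch_self_ne_zero hQ m
  have hm' := norm_pos_iff.1 (norm_one_sub_pow_succ_pos hQ m)
  rw [qBinomialCoeff, qBinomialCoeff, qPoch_succ, qPoch_succ, ← pow_succ']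
  field_simp

lemma summable_norm_qBinomialCoeff_mul_pow (hQ : ‖Q‖ < 1) (a : ℂ) {r : ℝ} (hr0 : 0 ≤ r)
    (hr1 : r < 1) : Summable fun m => ‖qBinomialCoeff Q a m‖ * r ^ m := by
  set c := qBinomialCoeff Q a
  have hQpow : Tendsto (fun m : ℕ => Q ^ m) atTop (𝓝 0) :=
    tendsto_pow_atTop_nhds_zero_of_norm_lt_one hQ
  have hnum : Tendsto (fun m : ℕ => ‖1 - a * Q ^ m‖ * r) atTop (𝓝 r) := by
    simpa using (((hQpow.const_mul a).const_sub 1).norm).mul_const r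
  have hden : Tendsto (fun m : ℕ => (1 + r) / 2 * ‖1 - Q ^ (m + 1)‖) atTop (𝓝 ((1 + r) / 2)) := by
    simpa using (((hQpow.comp (tendsto_add_atTop_nat 1)).const_sub 1).norm).const_mul ((1 + r) / 2)
  refine summable_of_ratio_norm_eventually_le (r := (1 + r) / 2) (by linarith) ?_
  filter_upwards [hnum.eventually_lt hden (by linarith)] with m hm
  have hpos := norm_one_sub_pow_succ_pos hQ m
  have hrec := congrArg norm (qBinomialCoeff_succ_mul hQ a m)
  rw [norm_mul, norm_mul] at hrec
  rw [Real.norm_of_nonneg (by positivity), Real.norm_of_nonneg (by positivity)]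
  refine le_of_mul_le_mul_right ?_ hpos
  calc ‖c (m + 1)‖ * r ^ (m + 1) * ‖1 - Q ^ (m + 1)‖
      = ‖c m‖ * r ^ m * (‖1 - a * Q ^ m‖ * r) := by rw [pow_succ]; linear_combination r ^ m * r * hrec
    _ ≤ ‖c m‖ * r ^ m * ((1 + r) / 2 * ‖1 - Q ^ (m + 1)‖) := by gcongr
    _ = (1 + r) / 2 * (‖c m‖ * r ^ m) * ‖1 - Q ^ (m + 1)‖ := by ring

lemma hasSum_qBinomialSeries (hQ : ‖Q‖ < 1) (a : ℂ) {x : ℂ} (hx : ‖x‖ < 1) :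
    HasSum (fun m => qBinomialCoeff Q a m * x ^ m) (qBinomialSeries Q a x) :=
  Summable.hasSum <| .of_norm <| by
    simpa only [norm_mul, norm_pow] using
      summable_norm_qBinomialCoeff_mul_pow hQ a (norm_nonneg x) hx

lemma one_sub_mul_qBinomialSeries (hQ : ‖Q‖ < 1) (a : ℂ) {x : ℂ} (hx : ‖x‖ < 1) :
    (1 - x) * qBinomialSeries Q a x = (1 - a * x) * qBinomialSeries Q a (Q * x) := by
  have hQx : ‖Q * x‖ < 1 := by
    rw [norm_mul]; nlinarith [norm_nonneg Q, norm_nonneg x]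
  have h1 := hasSum_qBinomialSeries hQ a hx
  have h2 := hasSum_qBinomialSeries hQ a hQx
  have hdiff : HasSum (fun m => qBinomialCoeff Q a m * (1 - Q ^ m) * x ^ m)
      (qBinomialSeries Q a x - qBinomialSeries Q a (Q * x)) :=
    (h1.sub h2).congr_fun fun m => by ring
  have hshift : HasSum (fun m => qBinomialCoeff Q a (m + 1) * (1 - Q ^ (m + 1)) * x ^ (m + 1))
      (x * (qBinomialSeries Q a x - a * qBinomialSeries Q a (Q * x))) :=
    ((h1.sub (h2.mul_left a)).mul_left x).congr_fun fun m => by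
      linear_combination x ^ (m + 1) * qBinomialCoeff_succ_mul hQ a m
  have hdiff' := (hasSum_nat_add_iff (f := fun m => qBinomialCoeff Q a m * (1 - Q ^ m) * x ^ m) 1).1 hshift
  simp only [Finset.sum_range_one, pow_zero, sub_self, mul_zero, zero_mul, add_zero] at hdiff'
  linear_combination hdiff.unique hdiff'

lemma qBinomialSeries_mul_qPoch (hQ : ‖Q‖ < 1) (a : ℂ) {x : ℂ} (hx : ‖x‖ < 1) (n : ℕ) :
    qBinomialSeries Q a x * qPoch Q x n = qPoch Q (a * x) n * qBinomialSeries Q a (Q ^ n * x) := by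
  induction n with
  | zero => simp [qPoch_zero]
  | succ n ih =>
    have hQnx : ‖Q ^ n * x‖ < 1 := by
      rw [norm_mul, norm_pow]
      nlinarith [pow_le_one₀ (norm_nonneg Q) hQ.le (n := n), norm_nonneg x, norm_nonneg (Q ^ n)]
    have hstep := one_sub_mul_qBinomialSeries hQ a hQnx
    rw [show Q * (Q ^ n * x) = Q ^ (n + 1) * x by ring] at hstep
    rw [qPoch_succ, qPoch_succ]
    linear_combination (1 - x * Q ^ n) * ih + qPoch Q (a * x) n * hstep

lemma tendsto_qBinomialSeries_nhds_zero (hQ : ‖Q‖ < 1) (a : ℂ) :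
    Tendsto (qBinomialSeries Q a) (𝓝 0) (𝓝 1) := by
  have hsum := summable_norm_qBinomialCoeff_mul_pow hQ a (r := 1 / 2) (by norm_num) (by norm_num)
  have hlim : ∑' m, qBinomialCoeff Q a m * (0 : ℂ) ^ m = 1 := by
    rw [tsum_eq_single 0 fun m hm => by simp [hm]]
    simp [qBinomialCoeff_zero]
  rw [← hlim]
  refine tendsto_tsum_of_dominated_convergence hsum
    (fun m => ((continuous_pow m).tendsto 0).const_mul _) ?_
  filter_upwards [Metric.ball_mem_nhds (0 : ℂ) (by norm_num : (0 : ℝ) < 1 / 2)] with w hw m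
  rw [mem_ball_zero_iff] at hw
  rw [norm_mul, norm_pow]
  gcongr

lemma summable_norm_mul_pow (hQ : ‖Q‖ < 1) (x : ℂ) : Summable fun j : ℕ => ‖x * Q ^ j‖ := by
  simpa only [norm_mul, norm_pow] using
    (summable_geometric_of_lt_one (norm_nonneg Q) hQ).mul_left ‖x‖

lemma hasProd_qPochInf (hQ : ‖Q‖ < 1) (x : ℂ) :
    HasProd (fun j : ℕ => 1 - x * Q ^ j) (qPochInf Q x) := by
  have h : Multipliable fun j : ℕ => 1 - x * Q ^ j := by
    simpa only [sub_eq_add_neg] using multipliable_one_add_of_summable (f := fun j => -(x * Q ^ j))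
      (by simpa only [norm_neg] using summable_norm_mul_pow hQ x)
  exact h.hasProd

lemma qPochInf_ne_zero (hQ : ‖Q‖ < 1) {x : ℂ} (hx : ‖x‖ < 1) : qPochInf Q x ≠ 0 := by
  have hfac (j : ℕ) : 1 + -(x * Q ^ j) ≠ 0 := by
    rw [← sub_eq_add_neg]
    refine one_sub_ne_zero_of_norm_lt_one ?_
    rw [norm_mul, norm_pow]
    nlinarith [pow_le_one₀ (norm_nonneg Q) hQ.le (n := j), norm_nonneg x, norm_nonneg (Q ^ j)]
  simpa only [qPochInf, sub_eq_add_neg] using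
    tprod_one_add_ne_zero_of_summable hfac (by simpa only [norm_neg] using summable_norm_mul_pow hQ x)

theorem qBinomialSeries_eq_div (hQ : ‖Q‖ < 1) (a : ℂ) {x : ℂ} (hx : ‖x‖ < 1) :
    qBinomialSeries Q a x = qPochInf Q (a * x) / qPochInf Q x := by
  have hQnx : Tendsto (fun n : ℕ => Q ^ n * x) atTop (𝓝 0) := by
    simpa using (tendsto_pow_atTop_nhds_zero_of_norm_lt_one hQ).mul_const x
  have hlhs : Tendsto (fun n => qBinomialSeries Q a x * qPoch Q x n) atTop
      (𝓝 (qBinomialSeries Q a x * qPochInf Q x)) :=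
    (hasProd_qPochInf hQ x).tendsto_prod_nat.const_mul _
  have hrhs : Tendsto (fun n => qPoch Q (a * x) n * qBinomialSeries Q a (Q ^ n * x)) atTop
      (𝓝 (qPochInf Q (a * x) * 1)) :=
    (hasProd_qPochInf hQ (a * x)).tendsto_prod_nat.mul
      ((tendsto_qBinomialSeries_nhds_zero hQ a).comp hQnx)
  simp only [← qBinomialSeries_mul_qPoch hQ a hx] at hrhs
  rw [eq_div_iff (qPochInf_ne_zero hQ hx), ← mul_one (qPochInf Q (a * x))]
  exact tendsto_nhds_unique hlhs hrhs

end QBinomial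

lemma qpow_add (q : ℝ) (u v : ℂ) : qpow q (u + v) = qpow q u * qpow q v := by
  rw [qpow, qpow, qpow, add_mul, Complex.exp_add]

lemma qpow_one {q : ℝ} (hq : 0 < q) : qpow q 1 = q := by
  rw [qpow, one_mul, ← Complex.ofReal_exp, Real.exp_log hq]

lemma norm_ofReal_sq_lt_one {q : ℝ} (hq0 : 0 ≤ q) (hq1 : q < 1) : ‖(q : ℂ) ^ 2‖ < 1 := by
  rw [norm_pow, Complex.norm_real, Real.norm_of_nonneg hq0]
  nlinarith

lemma psiL_eq_qBinomialSeries (q ν : ℝ) (zb z : ℂ) :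
    psiL q ν zb z = qBinomialSeries ((q : ℂ) ^ 2) (qpow q (-(2 * Complex.I * ν) + 2))
      (-((q : ℂ) ^ 2) * (zb * z)) :=
  tsum_congr fun m => by rw [qBinomialCoeff, pow_mul]; ring

lemma psiL_inv_mul_mul (q ν : ℝ) {c : ℂ} (hc : c ≠ 0) (zb z : ℂ) :
    psiL q ν (c⁻¹ * zb) (c * z) = psiL q ν zb z := by
  unfold psiL
  rw [show c⁻¹ * zb * (c * z) = zb * z by field_simp]

theorem psiL_C_star_eq_B (q ν : ℝ) (hq0 : 0 < q) (hq1 : q < 1) (zb z : ℂ) (hz : z ≠ 0)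
    (hconv : ‖zb * z‖ < q⁻¹) :
    zb / (1 - (q : ℂ) ^ 2) *
        (-(qpow q ((Complex.I * ν + 2) / 2)) * psiL q ν ((q : ℂ)⁻¹ * zb) z
          + qpow q (-(3 * Complex.I * ν / 2) + 3) * psiL q ν ((q : ℂ) * zb) z)
      = qpow q (Complex.I * ν / 2)
          * (psiL q ν zb ((q : ℂ)⁻¹ * z) - psiL q ν zb ((q : ℂ) * z))
          / ((1 - (q : ℂ) ^ 2) * z) := by
  have hq : (q : ℂ) ≠ 0 := by exact_mod_cast hq0.ne'
  have hQ := norm_ofReal_sq_lt_one hq0.le hq1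
  have hx : ‖-(q : ℂ) * (zb * z)‖ < 1 := by
    rw [norm_mul, norm_neg, Complex.norm_real, Real.norm_of_nonneg hq0.le]
    calc q * ‖zb * z‖ < q * q⁻¹ := by gcongr
      _ = 1 := mul_inv_cancel₀ hq0.ne'
  have hA : qpow q ((Complex.I * ν + 2) / 2) = qpow q (Complex.I * ν / 2) * q := by
    rw [← qpow_one hq0, ← qpow_add]; congr 1; ring
  have hB : qpow q (-(3 * Complex.I * ν / 2) + 3)
      = qpow q (Complex.I * ν / 2) * qpow q (-(2 * Complex.I * ν) + 2) * q := by
    rw [← qpow_one hq0, ← qpow_add, ← qpow_add]; congr 1; ring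
  have hfe := one_sub_mul_qBinomialSeries hQ (qpow q (-(2 * Complex.I * ν) + 2)) hx
  simp only [psiL_eq_qBinomialSeries, hA, hB]
  rw [show -((q : ℂ) ^ 2) * ((q : ℂ)⁻¹ * zb * z) = -q * (zb * z) by field_simp,
    show -((q : ℂ) ^ 2) * (zb * ((q : ℂ)⁻¹ * z)) = -q * (zb * z) by field_simp,
    show -((q : ℂ) ^ 2) * ((q : ℂ) * zb * z) = q ^ 2 * (-q * (zb * z)) by ring,
    show -((q : ℂ) ^ 2) * (zb * ((q : ℂ) * z)) = q ^ 2 * (-q * (zb * z)) by ring]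
  set F₀ := qBinomialSeries ((q : ℂ) ^ 2) (qpow q (-(2 * Complex.I * ν) + 2)) (-q * (zb * z))
  set F₁ := qBinomialSeries ((q : ℂ) ^ 2) (qpow q (-(2 * Complex.I * ν) + 2))
    (q ^ 2 * (-q * (zb * z)))
  set C := qpow q (Complex.I * ν / 2)
  set a := qpow q (-(2 * Complex.I * ν) + 2)
  field_simp [one_sub_ne_zero_of_norm_lt_one hQ]
  linear_combination (-C) * hfe

theorem psiL_eq_qPochInf_div (q ν : ℝ) (hq0 : 0 < q) (hq1 : q < 1) (w1 w2 : ℂ)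
    (hw : ‖w1 * w2‖ < (q⁻¹) ^ 2) :
    psiL q ν w1 w2
      = qPochInf ((q : ℂ) ^ 2) (-(qpow q (-(2 * Complex.I * ν) + 4)) * (w1 * w2))
          / qPochInf ((q : ℂ) ^ 2) (-((q : ℂ) ^ 2) * (w1 * w2)) := by
  have hx : ‖-((q : ℂ) ^ 2) * (w1 * w2)‖ < 1 := by
    rw [norm_mul, norm_neg, norm_pow, Complex.norm_real, Real.norm_of_nonneg hq0.le]
    calc q ^ 2 * ‖w1 * w2‖ < q ^ 2 * (q⁻¹) ^ 2 := by gcongr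
      _ = 1 := by field_simp
  rw [psiL_eq_qBinomialSeries, qBinomialSeries_eq_div (norm_ofReal_sq_lt_one hq0.le hq1) _ hx]
  have h4 : qpow q (-(2 * Complex.I * ν) + 4) = qpow q (-(2 * Complex.I * ν) + 2) * q ^ 2 := by
    rw [sq, ← qpow_one hq0, ← qpow_add, ← qpow_add]; congr 1; ring
  rw [h4]
  ring_nf

theorem psiL_invariant_vector_general (q ν : ℝ) (hq0 : 0 < q) (hq1 : q < 1)
    (zb z : ℂ) (hz : z ≠ 0)
    (hconv : ‖zb * z‖ < q⁻¹) :
    (zb / (1 - (q : ℂ) ^ 2) *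
        (-(qpow q ((Complex.I * ν + 2) / 2)) * psiL q ν ((q : ℂ)⁻¹ * zb) z
          + qpow q (-(3 * Complex.I * ν / 2) + 3) * psiL q ν ((q : ℂ) * zb) z)
      = qpow q (Complex.I * ν / 2)
          * (psiL q ν zb ((q : ℂ)⁻¹ * z) - psiL q ν zb ((q : ℂ) * z))
          / ((1 - (q : ℂ) ^ 2) * z)) ∧
    psiL q ν ((q : ℂ)⁻¹ * zb) ((q : ℂ) * z) = psiL q ν zb z ∧
    (∀ w1 w2 : ℂ, ‖w1 * w2‖ < (q⁻¹) ^ 2 →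
      psiL q ν w1 w2
        = qPochInf ((q : ℂ) ^ 2) (-(qpow q (-(2 * Complex.I * ν) + 4)) * (w1 * w2))
            / qPochInf ((q : ℂ) ^ 2) (-((q : ℂ) ^ 2) * (w1 * w2))) :=
  ⟨psiL_C_star_eq_B q ν hq0 hq1 zb z hz hconv,
    psiL_inv_mul_mul q ν (by exact_mod_cast hq0.ne') zb z,
    psiL_eq_qPochInf_div q ν hq0 hq1⟩

/-- `ψ_L` is the `U_q(SU(2))`-invariant vector of the class-one principal
series: it satisfies `π(C*).ψ_L = ψ_L.π(B)` and
`π(A*).ψ_L.π(A⁻¹) = ψ_L`, and it has the closed form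
`ψ_L(z̄,z) = (−q^{−2iν+4}z̄z;q²)_∞/(−q²z̄z;q²)_∞` for `|z̄z| < q⁻²`. -/
theorem psiL_invariant_vector (q ν : ℝ) (hq0 : 0 < q) (hq1 : q < 1)
    (zb z : ℂ) (hzb : zb ≠ 0) (hz : z ≠ 0)
    (hconv : ‖zb * z‖ < q⁻¹) :
    (zb / (1 - (q : ℂ) ^ 2) *
        (-(qpow q ((Complex.I * ν + 2) / 2)) * psiL q ν ((q : ℂ)⁻¹ * zb) z
          + qpow q (-(3 * Complex.I * ν / 2) + 3) * psiL q ν ((q : ℂ) * zb) z)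
      = qpow q (Complex.I * ν / 2)
          * (psiL q ν zb ((q : ℂ)⁻¹ * z) - psiL q ν zb ((q : ℂ) * z))
          / ((1 - (q : ℂ) ^ 2) * z)) ∧
    psiL q ν ((q : ℂ)⁻¹ * zb) ((q : ℂ) * z) = psiL q ν zb z ∧
    (∀ w1 w2 : ℂ, ‖w1 * w2‖ < (q⁻¹) ^ 2 →
      psiL q ν w1 w2
        = qPochInf ((q : ℂ) ^ 2) (-(qpow q (-(2 * Complex.I * ν) + 4)) * (w1 * w2))
            / qPochInf ((q : ℂ) ^ 2) (-((q : ℂ) ^ 2) * (w1 * w2))) :=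
  psiL_invariant_vector_general q ν hq0 hq1 zb z hz hconv
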